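/- Let M ≥ 2, let α ∈ R^M have Q-linearly independent coordinates, and let S = {k_0, k_1, ..., k_N} ⊆ Z^M be a finite set indexed so that k_0^T α < k_1^T α < ... < k_N^T α. Define B(α, S) = {a ∈ Z^M : 2||S||_∞ < ν(a) and k_0^T a < k_1^T a < ... < k_N^T a}. Then B(α, S) is an infinite set. -/

import Mathlib

/-!
For large real `t` the rounded vector `a = round (t • α)` satisfies `w ⬝ a = t (w ⬝ α) + O(‖w‖₁)`
for every integer vector `w`, so it inherits the sign of `w ⬝ α` for any finitely many `w`.
Applied to the differences `k m - k n` (`n < m`) this makes `n ↦ k n ⬝ a` strictly increasing;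
applied to the nonzero `b` with `‖b‖∞ ≤ 2‖S‖∞`, for which `b ⬝ α ≠ 0` by linear independence, it
gives `b ⬝ a ≠ 0`. Since `‖a‖∞ → ∞` as `t → ∞`, infinitely many such `a` occur.
-/

def supNorm {M : ℕ} (b : Fin M → ℤ) : ℕ := Finset.univ.sup fun i => (b i).natAbs

open Filter Finset

lemma natAbs_le_supNorm {M : ℕ} (b : Fin M → ℤ) (i : Fin M) : (b i).natAbs ≤ supNorm b :=
  le_sup (f := fun i => (b i).natAbs) (mem_univ i)

lemma finite_setOf_supNorm_le (M R : ℕ) : {b : Fin M → ℤ | supNorm b ≤ R}.Finite := by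
  refine (Set.finite_Icc (fun _ => -(R : ℤ)) fun _ => (R : ℤ)).subset fun b hb => ?_
  have hbi (i : Fin M) : -(R : ℤ) ≤ b i ∧ b i ≤ R := by
    have := (natAbs_le_supNorm b i).trans hb
    omega
  exact ⟨fun i => (hbi i).1, fun i => (hbi i).2⟩

lemma Set.infinite_of_eventually_mem_of_tendsto {β γ : Type*} {l : Filter γ} [l.NeBot]
    {S : Set β} {f : γ → β} {g : β → ℕ} (hS : ∀ᶠ x in l, f x ∈ S)
    (hg : Tendsto (g ∘ f) l atTop) : S.Infinite := by
  intro hfin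
  obtain ⟨R, hR⟩ := (hfin.image g).bddAbove
  obtain ⟨x, hxS, hxR⟩ := (hS.and (hg.eventually_gt_atTop R)).exists
  exact hxR.not_ge (hR ⟨f x, hxS, rfl⟩)

lemma LinearIndependent.sum_intCast_mul_ne_zero {ι : Type*} [Fintype ι] {α : ι → ℝ}
    (hα : LinearIndependent ℚ α) {b : ι → ℤ} (hb : b ≠ 0) : ∑ i, (b i : ℝ) * α i ≠ 0 := by
  intro hsum
  refine hb (funext (Fintype.linearIndependent_iff.mp (hα.restrict_scalars' ℤ) b ?_))
  simpa only [zsmul_eq_mul] using hsum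

section RoundedMultiples

variable {ι : Type*} [Fintype ι] (α : ι → ℝ)

lemma abs_sum_mul_round_sub_le (w : ι → ℤ) (t : ℝ) :
    |∑ i, (w i : ℝ) * round (t * α i) - t * ∑ i, w i * α i| ≤ ∑ i, |(w i : ℝ)| / 2 := by
  have hsplit : ∑ i, (w i : ℝ) * round (t * α i) - t * ∑ i, w i * α i
      = ∑ i, (w i : ℝ) * (round (t * α i) - t * α i) := by
    rw [mul_sum, ← sum_sub_distrib]
    exact sum_congr rfl fun i _ => by ring
  rw [hsplit]
  refine (abs_sum_le_sum_abs _ _).trans (sum_le_sum fun i _ => ?_)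
  rw [abs_mul, abs_sub_comm, div_eq_mul_one_div]
  exact mul_le_mul_of_nonneg_left (abs_sub_round _) (abs_nonneg _)

variable {α}

lemma eventually_pos_sum_mul_round {w : ι → ℤ} (hw : 0 < ∑ i, w i * α i) :
    ∀ᶠ t in atTop, 0 < ∑ i, w i * round (t * α i) := by
  filter_upwards [eventually_gt_atTop ((∑ i, |(w i : ℝ)| / 2) / ∑ i, w i * α i)] with t ht
  have herr := (abs_le.mp (abs_sum_mul_round_sub_le α w t)).1
  have hlarge : ∑ i, |(w i : ℝ)| / 2 < t * ∑ i, w i * α i := (div_lt_iff₀ hw).mp ht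
  have : (0 : ℝ) < ∑ i, w i * round (t * α i) := by push_cast; linarith
  exact_mod_cast this

lemma eventually_sum_mul_round_ne_zero {w : ι → ℤ} (hw : ∑ i, w i * α i ≠ 0) :
    ∀ᶠ t in atTop, ∑ i, w i * round (t * α i) ≠ 0 := by
  rcases hw.lt_or_gt with hneg | hpos
  · have hneg' : 0 < ∑ i, ((-w) i : ℝ) * α i := by
      simpa only [Pi.neg_apply, Int.cast_neg, neg_mul, sum_neg_distrib, neg_pos] using hneg
    filter_upwards [eventually_pos_sum_mul_round hneg'] with t ht
    simp only [Pi.neg_apply, neg_mul, sum_neg_distrib, neg_pos] at ht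
    exact ht.ne
  · exact (eventually_pos_sum_mul_round hpos).mono fun t ht => ht.ne'

lemma eventually_strictMono_sum_mul_round {κ : Type*} [Preorder κ] [Finite κ] {k : κ → ι → ℤ}
    (hk : StrictMono fun n => ∑ i, (k n i : ℝ) * α i) :
    ∀ᶠ t in atTop, StrictMono fun n => ∑ i, k n i * round (t * α i) := by
  refine eventually_all.2 fun n => eventually_all.2 fun m => eventually_imp_distrib_left.2
    fun hnm => ?_
  have hgap : 0 < ∑ i, ((k m - k n) i : ℝ) * α i := by
    simpa only [Pi.sub_apply, Int.cast_sub, sub_mul, sum_sub_distrib, sub_pos] using hk hnm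
  filter_upwards [eventually_pos_sum_mul_round hgap] with t ht
  simpa only [Pi.sub_apply, sub_mul, sum_sub_distrib, sub_pos] using ht

end RoundedMultiples

lemma tendsto_natAbs_round_mul_atTop {x : ℝ} (hx : x ≠ 0) :
    Tendsto (fun t : ℝ => (round (t * x)).natAbs) atTop atTop := by
  rw [← tendsto_natCast_atTop_iff (R := ℝ)]
  refine tendsto_atTop_mono (fun t => ?_) (tendsto_atTop_add_const_right _ (-1 / 2)
    (Tendsto.atTop_mul_const (abs_pos.2 hx) tendsto_id))
  have hround := (abs_sub_abs_le_abs_sub _ _).trans (abs_sub_round (t * x))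
  rw [abs_mul] at hround
  rw [Nat.cast_natAbs, Int.cast_abs, id]
  linarith [mul_le_mul_of_nonneg_right (le_abs_self t) (abs_nonneg x)]

theorem B_alpha_S_infinite (M N : ℕ) (hM : 2 ≤ M) (α : Fin M → ℝ)
    (hα : LinearIndependent ℚ α) (k : Fin (N + 1) → Fin M → ℤ)
    (hk : StrictMono fun n => ∑ i, (k n i : ℝ) * α i) :
    Set.Infinite {a : Fin M → ℤ |
      (∀ b : Fin M → ℤ, b ≠ 0 → (∑ i, b i * a i) = 0 →
        2 * ((Finset.univ.image k).sup supNorm) < supNorm b) ∧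
      StrictMono fun n => ∑ i, k n i * a i} := by
  set C := (univ.image k).sup supNorm
  have hsmall : ∀ᶠ t in atTop, ∀ b ∈ {b : Fin M → ℤ | supNorm b ≤ 2 * C},
      b ≠ 0 → ∑ i, b i * round (t * α i) ≠ 0 :=
    (finite_setOf_supNorm_le M (2 * C)).eventually_all.2 fun b _ => eventually_imp_distrib_left.2
      fun hb => eventually_sum_mul_round_ne_zero (hα.sum_intCast_mul_ne_zero hb)
  refine Set.infinite_of_eventually_mem_of_tendsto (l := atTop)
    (f := fun t i => round (t * α i)) (g := supNorm) ?_ ?_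
  · filter_upwards [hsmall, eventually_strictMono_sum_mul_round hk] with t hne hmono
    exact ⟨fun b hb hba => lt_of_not_ge fun hle => hne b hle hb hba, hmono⟩
  · let i₀ : Fin M := ⟨0, by omega⟩
    exact tendsto_atTop_mono (fun t => natAbs_le_supNorm _ i₀)
      (tendsto_natAbs_round_mul_atTop (hα.ne_zero i₀))
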